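/- If a differentiable function y(s) ≥ 0 satisfies y'(s) ≤ −C (r+Ks)^{−(ω−γ)/(N+ω)} y(s)^{1+1/(N+ω)} with y(0) ≤ r^{−(N+γ)}, where C ≥ K(N+γ), then y(s) ≤ (r+Ks)^{−(N+γ)} for all s ≥ 0. -/

import Mathlib

/-!
The barrier `z(s) = (r + K s) ^ (-(N + γ))` is a supersolution of the differential inequality:
the exponents are balanced so that `(r + K s) ^ (-(ω - γ) / (N + ω)) * z ^ (1 + 1 / (N + ω))`
equals `(r + K s) ^ (-(N + γ) - 1)`, and `C ≥ K (N + γ)` compares the coefficients with those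
of `z'`. As the right-hand side is decreasing in `y`, wherever `y ≥ z` we get `y' ≤ z'`, so `y`
cannot cross the barrier.
-/

open Set

/-- Perturbing `B` by `ε (x - a)` gives the strict contact condition of
`image_le_of_deriv_right_lt_deriv_boundary'`; then let `ε → 0`. -/
theorem image_le_of_deriv_right_le_deriv_above_boundary {f f' B B' : ℝ → ℝ} {a b : ℝ}
    (hf : ContinuousOn f (Icc a b)) (hf' : ∀ x ∈ Ico a b, HasDerivWithinAt f (f' x) (Ici x) x)
    (ha : f a ≤ B a) (hB : ContinuousOn B (Icc a b))
    (hB' : ∀ x ∈ Ico a b, HasDerivWithinAt B (B' x) (Ici x) x)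
    (bound : ∀ x ∈ Ico a b, B x ≤ f x → f' x ≤ B' x) :
    ∀ ⦃x⦄, x ∈ Icc a b → f x ≤ B x := by
  have perturbed : ∀ x ∈ Icc a b, ∀ ε > 0, f x ≤ B x + ε * (x - a) := by
    intro x hx ε hε
    refine image_le_of_deriv_right_lt_deriv_boundary' hf hf'
      (B := fun x => B x + ε * (x - a)) (B' := fun x => B' x + ε * 1) (by simpa using ha)
      (hB.add (continuousOn_const.mul (continuousOn_id.sub continuousOn_const))) ?_ ?_ hx
    · intro x hx
      exact (hB' x hx).add (((hasDerivWithinAt_id x (Ici x)).sub_const a).const_mul ε)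
    · intro x hx hfx
      have hxa : 0 ≤ ε * (x - a) := mul_nonneg hε.le (sub_nonneg.2 hx.1)
      linarith [bound x hx (by linarith)]
  intro x hx
  have : ContinuousWithinAt (fun ε => B x + ε * (x - a)) (Ioi 0) 0 := by fun_prop
  convert! continuousWithinAt_const.closure_le _ this (perturbed x hx) using 1 <;> simp

theorem hasDerivAt_affine_rpow_const {r K p x : ℝ} (hx : 0 < r + K * x) :
    HasDerivAt (fun s => (r + K * s) ^ p) (p * (r + K * x) ^ (p - 1) * K) x := by
  have hlin : HasDerivAt (fun s : ℝ => r + K * s) K x := by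
    simpa using ((hasDerivAt_id x).const_mul K).const_add r
  exact (Real.hasDerivAt_rpow_const (Or.inl hx.ne')).comp x hlin

theorem neg_mul_rpow_mul_rpow_rpow_le {N γ ω a K C : ℝ} (ha : 0 < a) (hNω : N + ω ≠ 0)
    (hCK : K * (N + γ) ≤ C) :
    -C * a ^ (-(ω - γ) / (N + ω)) * (a ^ (-(N + γ))) ^ (1 + 1 / (N + ω)) ≤
      -(N + γ) * a ^ (-(N + γ) - 1) * K := by
  have hexp : -C * a ^ (-(ω - γ) / (N + ω)) * (a ^ (-(N + γ))) ^ (1 + 1 / (N + ω)) =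
      -C * a ^ (-(N + γ) - 1) := by
    rw [← Real.rpow_mul ha.le, mul_assoc, ← Real.rpow_add ha]
    congr 2
    field_simp
    ring
  rw [hexp]
  nlinarith [Real.rpow_pos_of_pos ha (-(N + γ) - 1)]

theorem ode_comparison_barrier_general (N γ ω r K C : ℝ)
    (hN : 1 ≤ N) (hγ : 0 < γ) (hγω : γ < ω)
    (hr : 0 < r) (hK : 0 < K) (hCK : K * (N + γ) ≤ C)
    (y : ℝ → ℝ) (hy : Differentiable ℝ y)
    (hy0 : y 0 ≤ r ^ (-(N + γ)))
    (hode : ∀ s, 0 ≤ s →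
      deriv y s ≤ -C * (r + K * s) ^ (-(ω - γ) / (N + ω)) * y s ^ (1 + 1 / (N + ω))) :
    ∀ s, 0 ≤ s → y s ≤ (r + K * s) ^ (-(N + γ)) := by
  have hNω : 0 < N + ω := by linarith
  have hbase : ∀ x : ℝ, 0 ≤ x → 0 < r + K * x := fun x hx => by positivity
  intro s hs
  refine image_le_of_deriv_right_le_deriv_above_boundary hy.continuous.continuousOn
    (fun x _ => (hy x).hasDerivAt.hasDerivWithinAt) (by simpa using hy0)
    (fun x hx => (hasDerivAt_affine_rpow_const (hbase x hx.1)).continuousAt.continuousWithinAt)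
    (fun x hx => (hasDerivAt_affine_rpow_const (hbase x hx.1)).hasDerivWithinAt)
    (fun x hx hyx => ?_) (right_mem_Icc.2 hs)
  have ha := hbase x hx.1
  set a := r + K * x
  have hcoef : -C * a ^ (-(ω - γ) / (N + ω)) ≤ 0 :=
    mul_nonpos_of_nonpos_of_nonneg (neg_nonpos.2 (le_trans (by positivity) hCK))
      (Real.rpow_nonneg ha.le _)
  calc deriv y x ≤ -C * a ^ (-(ω - γ) / (N + ω)) * y x ^ (1 + 1 / (N + ω)) := hode x hx.1
    _ ≤ -C * a ^ (-(ω - γ) / (N + ω)) * (a ^ (-(N + γ))) ^ (1 + 1 / (N + ω)) :=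
        mul_le_mul_of_nonpos_left
          (Real.rpow_le_rpow (Real.rpow_nonneg ha.le _) hyx (by positivity)) hcoef
    _ ≤ -(N + γ) * a ^ (-(N + γ) - 1) * K := neg_mul_rpow_mul_rpow_rpow_le ha hNω.ne' hCK

/-- ODE comparison: if `y ≥ 0` satisfies
`y' ≤ -C (r+Ks)^{-(ω-γ)/(N+ω)} y^{1+1/(N+ω)}` with `y(0) ≤ r^{-(N+γ)}` and
`C ≥ K(N+γ)`, then `y(s) ≤ (r+Ks)^{-(N+γ)}` for all `s ≥ 0`. -/
theorem ode_comparison_barrier (N γ ω r K C : ℝ)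
    (hN : 1 ≤ N) (hγ : 0 < γ) (hγω : γ < ω) (hω : ω < 1)
    (hr : 0 < r) (hK : 0 < K) (hC : 0 < C) (hCK : K * (N + γ) ≤ C)
    (y : ℝ → ℝ) (hy : Differentiable ℝ y)
    (hynn : ∀ s, 0 ≤ s → 0 ≤ y s)
    (hy0 : y 0 ≤ r ^ (-(N + γ)))
    (hode : ∀ s, 0 ≤ s →
      deriv y s ≤ -C * (r + K * s) ^ (-(ω - γ) / (N + ω)) * y s ^ (1 + 1 / (N + ω))) :
    ∀ s, 0 ≤ s → y s ≤ (r + K * s) ^ (-(N + γ)) :=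
  ode_comparison_barrier_general N γ ω r K C hN hγ hγω hr hK hCK y hy hy0 hode
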